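/- Sobolev mapping property of homogeneous smoothing operators: Let μ ≥ 0, ρ ≥ 0, C₀ > 0, and s0, s ∈ ℝ with s0 > μ + 1/2 and s ≥ s0. Suppose M_{j,k} ∈ ℂ, defined for j, k ∈ ℤ \ {0} with j ≠ k, satisfy |M_{j,k}| ≤ C₀·min(|j−k|, |k|)^μ·max(|j−k|, |k|)^{−ρ}. Then there exists a constant C > 0, depending only on s, s0, μ, ρ, C₀, such that for all sequences u, v : ℤ → ℂ with ‖u‖_s < ∞ and ‖v‖_s < ∞, the sequence w defined by w_j := Σ_{k ≠ 0, k ≠ j} M_{j,k}·u_{j−k}·v_k for j ≠ 0 and w_0 := 0 is given by absolutely convergent sums and satisfies ‖w‖_{s+ρ} ≤ C·(‖u‖_s·‖v‖_{s0} + ‖u‖_{s0}·‖v‖_s). -/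

import Mathlib

/-- The `H^s` Sobolev norm of a sequence of Fourier coefficients. -/
noncomputable def Hnorm (s : ℝ) (u : ℤ → ℂ) : ℝ :=
  Real.sqrt (∑' j : ℤ, (max 1 |(j : ℝ)|) ^ (2 * s) * ‖u j‖ ^ 2)

/-- Finiteness of the `H^s` Sobolev norm of a sequence of Fourier coefficients. -/
def HSummable (s : ℝ) (u : ℤ → ℂ) : Prop :=
  Summable fun j : ℤ => (max 1 |(j : ℝ)|) ^ (2 * s) * ‖u j‖ ^ 2

/-- The Fourier coefficients of the homogeneous smoothing operator `R(u)v` with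
coefficients `M_{j,k}` acting on zero-average periodic functions. -/
noncomputable def smoothW (M : ℤ → ℤ → ℂ) (u v : ℤ → ℂ) (j : ℤ) : ℂ :=
  if j = 0 then 0 else
    ∑' k : ℤ, if k = 0 ∨ k = j then 0 else M j k * u (j - k) * v k

/-!
Since `⟨j⟩ ≤ 2 max(⟨j - k⟩, ⟨k⟩)`, the kernel bound gives
`⟨j⟩^(s+ρ) |M_{j,k}| ≲ ⟨j - k⟩^μ ⟨k⟩^s + ⟨j - k⟩^s ⟨k⟩^μ`, so `⟨j⟩^(s+ρ) |w_j|` is dominated by the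
convolution `(⟨·⟩^μ |u|) ∗ (⟨·⟩^s |v|)` plus its mirror image. Splitting
`⟨n⟩^μ |u_n| = ⟨n⟩^(μ - s0) · ⟨n⟩^s0 |u_n|`, Cauchy–Schwarz in `k` and Fubini bound the `ℓ²` norm of
this convolution by `(∑ ⟨n⟩^(2(μ - s0)))^(1/2) ‖u‖_s0 ‖v‖_s`, a convergent series as `s0 - μ > 1/2`.
Working in `ℝ≥0∞` makes every sum meaningful a priori, and finiteness of the final bound then
yields the absolute convergence of the sums defining `w`.
-/

open scoped ENNReal

theorem ENNReal.tsum_mul_sq_le {ι : Type*} (f g : ι → ℝ≥0∞) :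
    (∑' i, f i * g i) ^ 2 ≤ (∑' i, f i ^ 2) * ∑' i, g i ^ 2 := by
  let _ : MeasurableSpace ι := ⊤
  have h := ENNReal.lintegral_mul_le_Lp_mul_Lq MeasureTheory.Measure.count
    Real.HolderConjugate.two_two (measurable_from_top (f := f)).aemeasurable
    (measurable_from_top (f := g)).aemeasurable
  simp only [MeasureTheory.lintegral_count, Pi.mul_apply, ENNReal.rpow_two] at h
  calc (∑' i, f i * g i) ^ 2
      ≤ ((∑' i, f i ^ 2) ^ (1 / 2 : ℝ) * (∑' i, g i ^ 2) ^ (1 / 2 : ℝ)) ^ 2 := by gcongr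
    _ = (∑' i, f i ^ 2) * ∑' i, g i ^ 2 := by
      rw [mul_pow, ← ENNReal.rpow_natCast, ← ENNReal.rpow_natCast (_ ^ _), ← ENNReal.rpow_mul,
        ← ENNReal.rpow_mul]
      norm_num

theorem ENNReal.add_sq_le_two_mul (a b : ℝ≥0∞) : (a + b) ^ 2 ≤ 2 * (a ^ 2 + b ^ 2) := by
  have h := ENNReal.rpow_add_le_mul_rpow_add_rpow a b one_le_two
  norm_num [ENNReal.rpow_two] at h
  exact h

section Convolution

variable {G : Type*}

noncomputable def tsumConv [Sub G] (f g : G → ℝ≥0∞) (j : G) : ℝ≥0∞ :=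
  ∑' k, f (j - k) * g k

theorem tsumConv_comm [AddCommGroup G] (f g : G → ℝ≥0∞) : tsumConv f g = tsumConv g f := by
  ext j
  rw [tsumConv, tsumConv, ← (Equiv.subLeft j).tsum_eq]
  simp only [Equiv.subLeft_apply, sub_sub_cancel, mul_comm]

theorem tsum_tsumConv_mul_sq_le [AddGroup G] (f g h : G → ℝ≥0∞) :
    ∑' j, tsumConv (fun n => f n * g n) h j ^ 2 ≤
      (∑' n, f n ^ 2) * (∑' n, g n ^ 2) * ∑' n, h n ^ 2 := by
  have shift_left (F : G → ℝ≥0∞) (j : G) : ∑' k, F (j - k) = ∑' n, F n :=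
    (Equiv.subLeft j).tsum_eq F
  have shift_right (F : G → ℝ≥0∞) (k : G) : ∑' j, F (j - k) = ∑' n, F n :=
    (Equiv.subRight k).tsum_eq F
  calc ∑' j, tsumConv (fun n => f n * g n) h j ^ 2
      ≤ ∑' j, (∑' k, f (j - k) ^ 2) * ∑' k, (g (j - k) * h k) ^ 2 := by
        refine ENNReal.tsum_le_tsum fun j => ?_
        simpa only [tsumConv, mul_assoc] using
          ENNReal.tsum_mul_sq_le (fun k => f (j - k)) fun k => g (j - k) * h k
    _ = (∑' n, f n ^ 2) * ∑' k, ∑' j, g (j - k) ^ 2 * h k ^ 2 := by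
        simp only [shift_left fun n => f n ^ 2, mul_pow, ENNReal.tsum_mul_left]
        rw [ENNReal.tsum_comm]
    _ = (∑' n, f n ^ 2) * (∑' n, g n ^ 2) * ∑' n, h n ^ 2 := by
        simp only [ENNReal.tsum_mul_right, shift_right fun n => g n ^ 2, ENNReal.tsum_mul_left,
          mul_assoc]

end Convolution

section JapaneseBracket

noncomputable def japaneseBracket (j : ℤ) : ℝ := max 1 |(j : ℝ)|

theorem one_le_japaneseBracket (j : ℤ) : 1 ≤ japaneseBracket j := le_max_left _ _

theorem japaneseBracket_pos (j : ℤ) : 0 < japaneseBracket j :=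
  one_pos.trans_le (one_le_japaneseBracket j)

theorem japaneseBracket_rpow_pos (j : ℤ) (t : ℝ) : 0 < japaneseBracket j ^ t :=
  Real.rpow_pos_of_pos (japaneseBracket_pos j) t

theorem japaneseBracket_of_ne_zero {j : ℤ} (hj : j ≠ 0) : japaneseBracket j = |(j : ℝ)| :=
  max_eq_right (by exact_mod_cast Int.one_le_abs hj)

theorem japaneseBracket_add_le (a b : ℤ) :
    japaneseBracket (a + b) ≤ japaneseBracket a + japaneseBracket b := by
  have ha := one_le_japaneseBracket a
  refine max_le (by linarith [japaneseBracket_pos b]) ?_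
  push_cast
  exact (abs_add_le _ _).trans (add_le_add (le_max_right _ _) (le_max_right _ _))

theorem summable_japaneseBracket_rpow {t : ℝ} (ht : t < -1) :
    Summable fun n : ℤ => japaneseBracket n ^ t := by
  refine (Real.summable_abs_int_rpow (b := -t) (by linarith)).congr_cofinite ?_
  filter_upwards [(Set.finite_singleton (0 : ℤ)).compl_mem_cofinite] with n hn
  rw [japaneseBracket_of_ne_zero hn, neg_neg]

theorem min_rpow_mul_max_rpow_le {x y : ℝ} (hx : 0 ≤ x) (hy : 0 ≤ y) (μ s : ℝ) :
    min x y ^ μ * max x y ^ s ≤ x ^ μ * y ^ s + x ^ s * y ^ μ := by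
  rcases le_total x y with hxy | hxy
  · rw [min_eq_left hxy, max_eq_right hxy]
    exact le_add_of_nonneg_right (by positivity)
  · rw [min_eq_right hxy, max_eq_left hxy, mul_comm]
    exact le_add_of_nonneg_left (by positivity)

theorem japaneseBracket_rpow_mul_le_of_kernel_bound {C₀ μ ρ s m : ℝ} {j k : ℤ} (hC₀ : 0 ≤ C₀)
    (hsρ : 0 ≤ s + ρ) (hk : k ≠ 0) (hjk : j ≠ k) (hm : 0 ≤ m)
    (hM : m ≤ C₀ * min |(j : ℝ) - k| |(k : ℝ)| ^ μ * max |(j : ℝ) - k| |(k : ℝ)| ^ (-ρ)) :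
    japaneseBracket j ^ (s + ρ) * m ≤ C₀ * 2 ^ (s + ρ) *
      (japaneseBracket (j - k) ^ μ * japaneseBracket k ^ s +
        japaneseBracket (j - k) ^ s * japaneseBracket k ^ μ) := by
  have hx : |(j : ℝ) - k| = japaneseBracket (j - k) := by
    rw [japaneseBracket_of_ne_zero (sub_ne_zero.mpr hjk), Int.cast_sub]
  rw [hx, ← japaneseBracket_of_ne_zero hk] at hM
  set x := japaneseBracket (j - k)
  set y := japaneseBracket k
  have hx0 : 0 < x := japaneseBracket_pos _
  have hy0 : 0 < y := japaneseBracket_pos _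
  have hmax : 0 < max x y := lt_max_of_lt_left hx0
  have hj : japaneseBracket j ≤ 2 * max x y := by
    have := japaneseBracket_add_le (j - k) k
    rw [sub_add_cancel] at this
    linarith [le_max_left x y, le_max_right x y]
  calc japaneseBracket j ^ (s + ρ) * m
      ≤ (2 * max x y) ^ (s + ρ) * (C₀ * min x y ^ μ * max x y ^ (-ρ)) := by
        gcongr
        exact (japaneseBracket_pos j).le
    _ = C₀ * 2 ^ (s + ρ) * (min x y ^ μ * max x y ^ s) := by
        rw [Real.mul_rpow zero_le_two hmax.le, show s = s + ρ + -ρ by ring,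
          Real.rpow_add hmax (s + ρ)]
        ring_nf
    _ ≤ C₀ * 2 ^ (s + ρ) * (x ^ μ * y ^ s + x ^ s * y ^ μ) := by
        gcongr
        exact min_rpow_mul_max_rpow_le hx0.le hy0.le μ s

end JapaneseBracket

section SobolevNorm

variable {t : ℝ} {u : ℤ → ℂ}

noncomputable def weightedCoeff (t : ℝ) (u : ℤ → ℂ) (n : ℤ) : ℝ≥0∞ :=
  ENNReal.ofReal (japaneseBracket n ^ t) * ‖u n‖ₑ

theorem weightedCoeff_sq (t : ℝ) (u : ℤ → ℂ) (n : ℤ) :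
    weightedCoeff t u n ^ 2 = ENNReal.ofReal (japaneseBracket n ^ (2 * t) * ‖u n‖ ^ 2) := by
  have hb := japaneseBracket_pos n
  rw [weightedCoeff, ← ofReal_norm, ← ENNReal.ofReal_mul (by positivity),
    ← ENNReal.ofReal_pow (by positivity), mul_pow, ← Real.rpow_natCast, ← Real.rpow_mul hb.le,
    mul_comm t]
  norm_num

theorem Hnorm_nonneg (t : ℝ) (u : ℤ → ℂ) : 0 ≤ Hnorm t u := Real.sqrt_nonneg _

theorem HSummable.mono_exponent {s : ℝ} (h : HSummable s u) (hts : t ≤ s) : HSummable t u :=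
  h.of_nonneg_of_le (fun n => by positivity) fun n => by
    gcongr
    exact le_max_left _ _

theorem HSummable.tsum_weightedCoeff_sq (h : HSummable t u) :
    ∑' n, weightedCoeff t u n ^ 2 = ENNReal.ofReal (Hnorm t u ^ 2) := by
  rw [Hnorm, Real.sq_sqrt (tsum_nonneg fun n => by positivity),
    ENNReal.ofReal_tsum_of_nonneg (fun n => by positivity) h]
  exact tsum_congr fun n => weightedCoeff_sq t u n

theorem hSummable_and_Hnorm_le {c : ℝ} (hc : 0 ≤ c)
    (h : ∑' n, weightedCoeff t u n ^ 2 ≤ ENNReal.ofReal (c ^ 2)) :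
    HSummable t u ∧ Hnorm t u ≤ c := by
  have hnonneg (n : ℤ) : 0 ≤ japaneseBracket n ^ (2 * t) * ‖u n‖ ^ 2 :=
    mul_nonneg (japaneseBracket_rpow_pos n _).le (sq_nonneg _)
  simp only [weightedCoeff_sq] at h
  have hsum : HSummable t u :=
    (ENNReal.summable_toReal (ne_top_of_le_ne_top ENNReal.ofReal_ne_top h)).congr fun n =>
      ENNReal.toReal_ofReal (hnonneg n)
  rw [← ENNReal.ofReal_tsum_of_nonneg hnonneg hsum,
    ENNReal.ofReal_le_ofReal_iff (sq_nonneg c)] at h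
  exact ⟨hsum, (Real.sqrt_le_sqrt h).trans_eq (Real.sqrt_sq hc)⟩

theorem tsum_tsumConv_weightedCoeff_sq_le {μ s0 s : ℝ} (hs0 : μ + 1 / 2 < s0) {v : ℤ → ℂ}
    (hu : HSummable s0 u) (hv : HSummable s v) :
    ∑' j, tsumConv (weightedCoeff μ u) (weightedCoeff s v) j ^ 2 ≤
      ENNReal.ofReal ((∑' n : ℤ, japaneseBracket n ^ (2 * (μ - s0))) *
        (Hnorm s0 u * Hnorm s v) ^ 2) := by
  have hsplit : weightedCoeff μ u =
      fun n => ENNReal.ofReal (japaneseBracket n ^ (μ - s0)) * weightedCoeff s0 u n := by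
    ext n
    rw [weightedCoeff, weightedCoeff, ← mul_assoc,
      ← ENNReal.ofReal_mul (japaneseBracket_rpow_pos n _).le,
      ← Real.rpow_add (japaneseBracket_pos n), sub_add_cancel]
  have hS : ∑' n, ENNReal.ofReal (japaneseBracket n ^ (μ - s0)) ^ 2 =
      ENNReal.ofReal (∑' n : ℤ, japaneseBracket n ^ (2 * (μ - s0))) := by
    rw [ENNReal.ofReal_tsum_of_nonneg (fun n => (japaneseBracket_rpow_pos n _).le)
      (summable_japaneseBracket_rpow (by linarith))]
    refine tsum_congr fun n => ?_
    rw [← ENNReal.ofReal_pow (japaneseBracket_rpow_pos n _).le, ← Real.rpow_natCast,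
      ← Real.rpow_mul (japaneseBracket_pos n).le, mul_comm]
    norm_num
  rw [hsplit]
  refine (tsum_tsumConv_mul_sq_le _ _ _).trans_eq ?_
  rw [hS, hu.tsum_weightedCoeff_sq, hv.tsum_weightedCoeff_sq, mul_pow,
    ENNReal.ofReal_mul (tsum_nonneg fun n => (japaneseBracket_rpow_pos n _).le),
    ENNReal.ofReal_mul (sq_nonneg _), mul_assoc]

end SobolevNorm

noncomputable def smoothTerm (M : ℤ → ℤ → ℂ) (u v : ℤ → ℂ) (j k : ℤ) : ℂ :=
  if k = 0 ∨ k = j then 0 else M j k * u (j - k) * v k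

section SmoothingOperator

variable {μ ρ C₀ s0 s : ℝ} {M : ℤ → ℤ → ℂ} {u v : ℤ → ℂ}

theorem smoothW_of_ne_zero {j : ℤ} (hj : j ≠ 0) :
    smoothW M u v j = ∑' k, smoothTerm M u v j k :=
  if_neg hj

theorem ofReal_mul_tsum_enorm_smoothTerm_le (hC₀ : 0 ≤ C₀) (hsρ : 0 ≤ s + ρ)
    (hM : ∀ j k : ℤ, j ≠ 0 → k ≠ 0 → j ≠ k →
      ‖M j k‖ ≤ C₀ * (min |(j : ℝ) - (k : ℝ)| |(k : ℝ)|) ^ μ *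
        (max |(j : ℝ) - (k : ℝ)| |(k : ℝ)|) ^ (-ρ))
    {j : ℤ} (hj : j ≠ 0) :
    ENNReal.ofReal (japaneseBracket j ^ (s + ρ)) * ∑' k, ‖smoothTerm M u v j k‖ₑ ≤
      ENNReal.ofReal (C₀ * 2 ^ (s + ρ)) *
        (tsumConv (weightedCoeff μ u) (weightedCoeff s v) j +
          tsumConv (weightedCoeff s u) (weightedCoeff μ v) j) := by
  rw [tsumConv, tsumConv, ← ENNReal.tsum_add, ← ENNReal.tsum_mul_left, ← ENNReal.tsum_mul_left]
  refine ENNReal.tsum_le_tsum fun k => ?_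
  by_cases hk : k = 0 ∨ k = j
  · simp [smoothTerm, hk]
  obtain ⟨hk0, hkj⟩ := not_or.mp hk
  have hx := japaneseBracket_pos (j - k)
  have hy := japaneseBracket_pos k
  have hj' := japaneseBracket_pos j
  have hbound : japaneseBracket j ^ (s + ρ) * ‖M j k‖ * (‖u (j - k)‖ * ‖v k‖) ≤
      C₀ * 2 ^ (s + ρ) *
        (japaneseBracket (j - k) ^ μ * ‖u (j - k)‖ * (japaneseBracket k ^ s * ‖v k‖) +
          japaneseBracket (j - k) ^ s * ‖u (j - k)‖ * (japaneseBracket k ^ μ * ‖v k‖)) := by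
    refine (mul_le_mul_of_nonneg_right
      (japaneseBracket_rpow_mul_le_of_kernel_bound hC₀ hsρ hk0 (Ne.symm hkj) (norm_nonneg _)
        (hM j k hj hk0 (Ne.symm hkj))) (by positivity)).trans_eq ?_
    ring
  rw [smoothTerm, if_neg hk]
  convert ENNReal.ofReal_le_ofReal hbound using 1 <;>
    simp (disch := positivity) only [weightedCoeff, ENNReal.ofReal_mul, ENNReal.ofReal_add,
      ofReal_norm, enorm_mul, mul_assoc]

theorem tsum_sq_tsumConv_add_tsumConv_le (hs0 : μ + 1 / 2 < s0) (hs : s0 ≤ s)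
    (hu : HSummable s u) (hv : HSummable s v) :
    ∑' j, (tsumConv (weightedCoeff μ u) (weightedCoeff s v) j +
        tsumConv (weightedCoeff s u) (weightedCoeff μ v) j) ^ 2 ≤
      ENNReal.ofReal (2 * (∑' n : ℤ, japaneseBracket n ^ (2 * (μ - s0))) *
        (Hnorm s u * Hnorm s0 v + Hnorm s0 u * Hnorm s v) ^ 2) := by
  set S := ∑' n : ℤ, japaneseBracket n ^ (2 * (μ - s0))
  have hS : 0 ≤ S := tsum_nonneg fun n => (japaneseBracket_rpow_pos n _).le
  rw [tsumConv_comm (weightedCoeff s u)]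
  calc _ ≤ ∑' j, 2 * (tsumConv (weightedCoeff μ u) (weightedCoeff s v) j ^ 2 +
          tsumConv (weightedCoeff μ v) (weightedCoeff s u) j ^ 2) :=
        ENNReal.tsum_le_tsum fun j => ENNReal.add_sq_le_two_mul _ _
    _ ≤ 2 * (ENNReal.ofReal (S * (Hnorm s0 u * Hnorm s v) ^ 2) +
          ENNReal.ofReal (S * (Hnorm s0 v * Hnorm s u) ^ 2)) := by
        rw [ENNReal.tsum_mul_left, ENNReal.tsum_add]
        gcongr
        · exact tsum_tsumConv_weightedCoeff_sq_le hs0 (hu.mono_exponent hs) hv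
        · exact tsum_tsumConv_weightedCoeff_sq_le hs0 (hv.mono_exponent hs) hu
    _ ≤ _ := by
        rw [← ENNReal.ofReal_add (by positivity) (by positivity), ← ENNReal.ofReal_ofNat 2,
          ← ENNReal.ofReal_mul zero_le_two]
        refine ENNReal.ofReal_le_ofReal ?_
        have hcross := mul_nonneg (mul_nonneg (Hnorm_nonneg s u) (Hnorm_nonneg s0 v))
          (mul_nonneg (Hnorm_nonneg s0 u) (Hnorm_nonneg s v))
        nlinarith [mul_nonneg hS hcross]

theorem smoothW_estimate (hC₀ : 0 ≤ C₀) (hs0 : μ + 1 / 2 < s0) (hs : s0 ≤ s) (hsρ : 0 ≤ s + ρ)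
    (hM : ∀ j k : ℤ, j ≠ 0 → k ≠ 0 → j ≠ k →
      ‖M j k‖ ≤ C₀ * (min |(j : ℝ) - (k : ℝ)| |(k : ℝ)|) ^ μ *
        (max |(j : ℝ) - (k : ℝ)| |(k : ℝ)|) ^ (-ρ))
    (hu : HSummable s u) (hv : HSummable s v) :
    (∀ j : ℤ, j ≠ 0 → Summable fun k => ‖smoothTerm M u v j k‖) ∧
      HSummable (s + ρ) (smoothW M u v) ∧
      Hnorm (s + ρ) (smoothW M u v) ≤
        C₀ * 2 ^ (s + ρ) * Real.sqrt (2 * ∑' n : ℤ, japaneseBracket n ^ (2 * (μ - s0))) *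
          (Hnorm s u * Hnorm s0 v + Hnorm s0 u * Hnorm s v) := by
  set P := fun j => tsumConv (weightedCoeff μ u) (weightedCoeff s v) j +
    tsumConv (weightedCoeff s u) (weightedCoeff μ v) j
  set K := ENNReal.ofReal (C₀ * 2 ^ (s + ρ))
  set S := 2 * ∑' n : ℤ, japaneseBracket n ^ (2 * (μ - s0))
  set X := Hnorm s u * Hnorm s0 v + Hnorm s0 u * Hnorm s v
  have hS : 0 ≤ S := mul_nonneg zero_le_two (tsum_nonneg fun n => (japaneseBracket_rpow_pos n _).le)
  have hX : 0 ≤ X := add_nonneg (mul_nonneg (Hnorm_nonneg _ _) (Hnorm_nonneg _ _))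
    (mul_nonneg (Hnorm_nonneg _ _) (Hnorm_nonneg _ _))
  have hbound : ∑' j, (K * P j) ^ 2 ≤ ENNReal.ofReal ((C₀ * 2 ^ (s + ρ) * Real.sqrt S * X) ^ 2) :=
    calc ∑' j, (K * P j) ^ 2 = K ^ 2 * ∑' j, P j ^ 2 := by
          simp only [mul_pow, ENNReal.tsum_mul_left]
      _ ≤ K ^ 2 * ENNReal.ofReal (S * X ^ 2) := by
          gcongr
          exact tsum_sq_tsumConv_add_tsumConv_le hs0 hs hu hv
      _ = _ := by
          rw [← ENNReal.ofReal_pow (by positivity), ← ENNReal.ofReal_mul (by positivity), mul_pow,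
            mul_pow, mul_pow, Real.sq_sqrt hS]
          ring_nf
  have hfinite (j : ℤ) : K * P j ≠ ⊤ := fun h =>
    ENNReal.ne_top_of_tsum_ne_top (ne_top_of_le_ne_top ENNReal.ofReal_ne_top hbound) j
      (by simp [h])
  have hterm (j : ℤ) (hj : j ≠ 0) :=
    ofReal_mul_tsum_enorm_smoothTerm_le (u := u) (v := v) hC₀ hsρ hM hj
  have hsum (j : ℤ) (hj : j ≠ 0) : Summable fun k => ‖smoothTerm M u v j k‖ := by
    refine tsum_enorm_ne_top_iff_summable_norm.mp fun htop =>
      hfinite j (top_le_iff.mp ((hterm j hj).trans_eq' ?_))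
    rw [htop, ENNReal.mul_top (ENNReal.ofReal_pos.mpr (japaneseBracket_rpow_pos j _)).ne']
  have hw (j : ℤ) : weightedCoeff (s + ρ) (smoothW M u v) j ≤ K * P j := by
    by_cases hj : j = 0
    · simp [weightedCoeff, smoothW, hj]
    calc weightedCoeff (s + ρ) (smoothW M u v) j
        ≤ ENNReal.ofReal (japaneseBracket j ^ (s + ρ)) * ∑' k, ‖smoothTerm M u v j k‖ₑ := by
          rw [weightedCoeff, smoothW_of_ne_zero hj]
          gcongr
          exact enorm_tsum_le_tsum_enorm
      _ ≤ K * P j := hterm j hj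
  exact ⟨hsum, hSummable_and_Hnorm_le (by positivity)
    ((ENNReal.tsum_le_tsum fun j => pow_le_pow_left' (hw j) 2).trans hbound)⟩

end SmoothingOperator

/-- Sobolev mapping property of homogeneous smoothing operators:
`‖R(u)v‖_{s+ρ} ≤ C (‖u‖_s ‖v‖_{s0} + ‖u‖_{s0} ‖v‖_s)`, with absolutely convergent sums. -/
theorem smoothing_operator_action (μ ρ C₀ s0 s : ℝ) (hμ : 0 ≤ μ) (hρ : 0 ≤ ρ)
    (hC₀ : 0 < C₀) (hs0 : μ + 1 / 2 < s0) (hs : s0 ≤ s) :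
    ∃ C : ℝ, 0 < C ∧
      ∀ M : ℤ → ℤ → ℂ,
        (∀ j k : ℤ, j ≠ 0 → k ≠ 0 → j ≠ k →
          ‖M j k‖ ≤
            C₀ * (min |(j : ℝ) - (k : ℝ)| |(k : ℝ)|) ^ μ *
              (max |(j : ℝ) - (k : ℝ)| |(k : ℝ)|) ^ (-ρ)) →
      ∀ u v : ℤ → ℂ, HSummable s u → HSummable s v →
        (∀ j : ℤ, j ≠ 0 →
          Summable fun k : ℤ =>
            ‖if k = 0 ∨ k = j then 0 else M j k * u (j - k) * v k‖) ∧
        HSummable (s + ρ) (smoothW M u v) ∧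
        Hnorm (s + ρ) (smoothW M u v) ≤
          C * (Hnorm s u * Hnorm s0 v + Hnorm s0 u * Hnorm s v) := by
  have hS : 0 < ∑' n : ℤ, japaneseBracket n ^ (2 * (μ - s0)) :=
    (summable_japaneseBracket_rpow (by linarith)).tsum_pos
      (fun n => (japaneseBracket_rpow_pos n _).le) 0 (japaneseBracket_rpow_pos 0 _)
  exact ⟨_, by positivity, fun M hM u v hu hv =>
    smoothW_estimate hC₀.le hs0 hs (by linarith) hM hu hv⟩
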